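/- arXiv:2206.07540 — 10 statements merged into one kernel-verified Lean document; each statement's English description precedes it below -/
import Mathlib

section
/- Let ψ : G → G be a commutator-central endomorphism of a group G and let α ∈ 𝓔. Then for all g, h ∈ G, the element ψ_α(g·h) · (ψ_α(g) · ψ_α(h))⁻¹ lies in the center Z(G); that is, ψ_α is multiplicative modulo the center. -/
/-- Evaluation of an element of the free group `𝓔 = FreeGroup (Monoid.End G)`
at an element `g : G`: the image of `α` under the homomorphism `𝓔 → G`
given by `FreeGroup.lift (fun φ => φ g)`. -/
def evalE {G : Type*} [Group G] (α : FreeGroup (Monoid.End G)) (g : G) : G :=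
  FreeGroup.lift (fun φ : Monoid.End G => φ g) α

/-!
Modulo the commutator subgroup, `g ↦ α(g)` is a homomorphism: in the abelianization,
evaluation at `g` turns the words of `𝓔` into products of the homomorphisms
`Abelianization.of ∘ φ`, and these form a commutative group. Hence
`α(gh) (α(g) α(h))⁻¹` is a product of commutators, which `ψ` sends into the center.
-/

open scoped commutatorElement

theorem Abelianization.of_evalE {G : Type*} [Group G] (α : FreeGroup (Monoid.End G)) (g : G) :
    of (evalE α g) = FreeGroup.lift (fun φ : Monoid.End G => of.comp φ) α g := by
  have h : of.comp (FreeGroup.lift fun φ : Monoid.End G => φ g) =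
      (MonoidHom.eval g).comp (FreeGroup.lift fun φ : Monoid.End G => of.comp φ) :=
    FreeGroup.ext_hom _ _ fun _ => rfl
  exact DFunLike.congr_fun h α

theorem evalE_mul_mul_inv_mem_commutator {G : Type*} [Group G]
    (α : FreeGroup (Monoid.End G)) (g h : G) :
    evalE α (g * h) * (evalE α g * evalE α h)⁻¹ ∈ commutator G := by
  rw [← Abelianization.ker_of, MonoidHom.mem_ker]
  simp only [map_mul, map_inv, Abelianization.of_evalE, mul_inv_cancel]

theorem map_mem_of_mem_commutator {G H F : Type*} [Group G] [Group H] [FunLike F G H]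
    [MonoidHomClass F G H] (f : F) {K : Subgroup H} (hf : ∀ g h : G, f ⁅g, h⁆ ∈ K) {x : G}
    (hx : x ∈ commutator G) : f x ∈ K :=
  (Subgroup.commutator_le.2 fun g _ h _ => hf g h : commutator G ≤ K.comap (f : G →* H)) hx

/-- `ψ_α` is multiplicative modulo the center. -/
theorem psiAlpha_mul_mod_center {G : Type*} [Group G]
    (ψ : Monoid.End G) (hψ : ∀ g h : G, ψ ⁅g, h⁆ ∈ Subgroup.center G)
    (α : FreeGroup (Monoid.End G)) (g h : G) :
    ψ (evalE α (g * h)) * (ψ (evalE α g) * ψ (evalE α h))⁻¹ ∈ Subgroup.center G := by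
  simpa only [map_mul, map_inv] using
    map_mem_of_mem_commutator ψ hψ (evalE_mul_mul_inv_mem_commutator α g h)
end

section
/- Let ψ : G → G be a commutator-central endomorphism of a group G and let α ∈ 𝓔. Then for all g ∈ G, the element ψ_α(g⁻¹) · ψ_α(g) lies in the center Z(G); that is, ψ_α(g)⁻¹ ≡ ψ_α(g⁻¹) modulo Z(G). -/
open scoped commutatorElement

/-! Modulo the center, `ψ_α` factors through a homomorphism with abelian image, and for such a
homomorphism `f` the maps `α ↦ f (α g⁻¹)` and `α ↦ (f (α g))⁻¹` are both homomorphisms on `𝓔`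
which agree on the generators, because endomorphisms commute with inversion. -/

theorem QuotientGroup.commute_mk_of_commutatorElement_mem {G : Type*} [Group G]
    {N : Subgroup G} [N.Normal] {x y : G} (h : ⁅x, y⁆ ∈ N) : Commute (x : G ⧸ N) (y : G ⧸ N) := by
  rw [← commutatorElement_eq_one_iff_commute, ← QuotientGroup.mk'_apply, ← QuotientGroup.mk'_apply,
    ← map_commutatorElement, QuotientGroup.mk'_apply, QuotientGroup.eq_one_iff]
  exact h

theorem map_evalE_inv {G H : Type*} [Group G] [Group H] (f : G →* H)
    (hf : ∀ x y, Commute (f x) (f y)) (α : FreeGroup (Monoid.End G)) (g : G) :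
    f (evalE α g⁻¹) = (f (evalE α g))⁻¹ := by
  induction α with
  | C1 => simp [evalE]
  | of φ => simp [evalE]
  | inv_of φ ih => simp only [evalE, map_inv] at ih ⊢; rw [ih]
  | mul a b iha ihb =>
    simp only [evalE, map_mul] at iha ihb ⊢
    rw [iha, ihb, ← mul_inv_rev, (hf _ _).eq]

/-- `ψ_α(g)⁻¹ ≡ ψ_α(g⁻¹)` modulo the center. -/
theorem psiAlpha_inv_mod_center {G : Type*} [Group G]
    (ψ : Monoid.End G) (hψ : ∀ g h : G, ψ ⁅g, h⁆ ∈ Subgroup.center G)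
    (α : FreeGroup (Monoid.End G)) (g : G) :
    ψ (evalE α g⁻¹) * ψ (evalE α g) ∈ Subgroup.center G := by
  have hcomm (x y : G) : Commute (ψ x : G ⧸ Subgroup.center G) (ψ y) :=
    QuotientGroup.commute_mk_of_commutatorElement_mem (map_commutatorElement ψ x y ▸ hψ x y)
  have hinv := map_evalE_inv ((QuotientGroup.mk' (Subgroup.center G)).comp ψ) hcomm α g
  rw [← QuotientGroup.eq_one_iff, QuotientGroup.mk_mul]
  exact mul_eq_one_iff_eq_inv.mpr hinv
end

section
/- Let ψ : G → G be a commutator-central endomorphism of a group G and let α ∈ 𝓔. Then (G, ∘_{ψ,α}) is a group: the operation ∘_{ψ,α} is associative, 1 is a two-sided identity for ∘_{ψ,α}, and for every g ∈ G the element ψ_α(g)⁻¹ · g⁻¹ · ψ_α(g) is a two-sided inverse of g with respect to ∘_{ψ,α}. -/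
/-- The binary operation `g ∘_{ψ,α} h = g · ψ_α(g) · h · ψ_α(g)⁻¹`, where
`ψ_α(g) = ψ (α(g))`. -/
def op {G : Type*} [Group G] (ψ : Monoid.End G) (α : FreeGroup (Monoid.End G)) (g h : G) : G :=
  g * ψ (evalE α g) * h * (ψ (evalE α g))⁻¹

open scoped commutatorElement

/-!
Write `κ g` for conjugation by `ψ (α g)`. Modulo `[G, G]` the map `g ↦ α g` is a
homomorphism (it is one for each generator of `𝓔`, and homomorphisms into `Gᵃᵇ` form a
group), and `ψ` sends `[G, G]` into `Z(G)`, on which conjugation is trivial; so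
`κ : G →* Aut G` is a homomorphism factoring through `Gᵃᵇ`, hence `κ (κ g h) = κ h`.
For any such `κ` the operation `g ∘ h = g · κ g h` is a group law
with identity `1` and inverse `(κ g)⁻¹ g⁻¹`.
-/

section TwistedMul

variable {G : Type*} [Group G] (κ : G →* MulAut G)

def twistedMul (g h : G) : G := g * κ g h

variable {κ}

theorem twistedMul_assoc (hκ : ∀ g h, κ (κ g h) = κ h) (g h k : G) :
    twistedMul κ (twistedMul κ g h) k = twistedMul κ g (twistedMul κ h k) := by
  simp only [twistedMul, map_mul, hκ, MulAut.mul_apply, mul_assoc]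

theorem one_twistedMul (g : G) : twistedMul κ 1 g = g := by
  simp [twistedMul]

theorem twistedMul_one (g : G) : twistedMul κ g 1 = g := by
  simp [twistedMul]

theorem twistedMul_inv_left (hκ : ∀ g h, κ (κ g h) = κ h) (g : G) :
    twistedMul κ ((κ g)⁻¹ g⁻¹) g = 1 := by
  rw [twistedMul, ← map_inv κ g, hκ, ← map_mul, inv_mul_cancel, map_one]

theorem twistedMul_inv_right (g : G) : twistedMul κ g ((κ g)⁻¹ g⁻¹) = 1 := by
  rw [twistedMul, MulAut.apply_inv_self, mul_inv_cancel]

end TwistedMul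

theorem conj_map_eq_of_abelianization_eq {G H : Type*} [Group G] [Group H] {ψ : G →* H}
    (hψ : ∀ g h : G, ψ ⁅g, h⁆ ∈ Subgroup.center H)
    {a b : G} (hab : Abelianization.of a = Abelianization.of b) :
    MulAut.conj (ψ a) = MulAut.conj (ψ b) := by
  have hmem : a⁻¹ * b ∈ commutator G := QuotientGroup.eq.1 hab
  have hle : commutator G ≤ (Subgroup.center H).comap ψ :=
    Subgroup.commutator_le.2 fun g _ h _ => hψ g h
  have hcentral : ψ (a⁻¹ * b) ∈ Subgroup.center H := hle hmem
  have hconj : MulAut.conj (ψ (a⁻¹ * b)) = 1 := by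
    ext x
    rw [MulAut.conj_apply, ← Subgroup.mem_center_iff.1 hcentral x, mul_inv_cancel_right,
      MulAut.one_apply]
  rw [← mul_inv_cancel_left a b, map_mul ψ a, map_mul, hconj, mul_one]

section Eval

variable {G : Type*} [Group G]

def evalAb : FreeGroup (Monoid.End G) →* G →* Abelianization G :=
  FreeGroup.lift fun φ => Abelianization.of.comp φ

theorem evalAb_apply (α : FreeGroup (Monoid.End G)) (g : G) :
    evalAb α g = Abelianization.of (evalE α g) := by
  have : (MonoidHom.eval g).comp evalAb =
      Abelianization.of.comp (FreeGroup.lift fun φ : Monoid.End G => φ g) :=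
    FreeGroup.ext_hom _ _ fun φ => by simp [evalAb]; rfl
  exact DFunLike.congr_fun this α

theorem abelianization_of_evalE_mul (α : FreeGroup (Monoid.End G)) (g h : G) :
    Abelianization.of (evalE α (g * h)) = Abelianization.of (evalE α g * evalE α h) := by
  rw [map_mul, ← evalAb_apply, ← evalAb_apply, ← evalAb_apply, map_mul]

theorem abelianization_of_evalE_conj (α : FreeGroup (Monoid.End G)) (c g : G) :
    Abelianization.of (evalE α (c * g * c⁻¹)) = Abelianization.of (evalE α g) := by
  rw [← evalAb_apply, ← evalAb_apply, map_mul, map_mul, mul_right_comm, map_inv,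
    mul_inv_cancel, one_mul]

variable (ψ : Monoid.End G) (hψ : ∀ g h : G, ψ ⁅g, h⁆ ∈ Subgroup.center G)
  (α : FreeGroup (Monoid.End G))

def conjEval : G →* MulAut G :=
  MonoidHom.mk' (fun g => MulAut.conj (ψ (evalE α g))) fun g h => by
    rw [← map_mul, ← map_mul]
    exact conj_map_eq_of_abelianization_eq hψ (abelianization_of_evalE_mul α g h)

theorem conjEval_apply (g : G) : conjEval ψ hψ α g = MulAut.conj (ψ (evalE α g)) := rfl

theorem conjEval_conjEval (g h : G) :
    conjEval ψ hψ α (conjEval ψ hψ α g h) = conjEval ψ hψ α h :=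
  conj_map_eq_of_abelianization_eq hψ (abelianization_of_evalE_conj α _ h)

theorem op_eq_twistedMul (g h : G) : op ψ α g h = twistedMul (conjEval ψ hψ α) g h := by
  rw [op, twistedMul, conjEval_apply, MulAut.conj_apply, mul_assoc, mul_assoc, mul_assoc]

end Eval

/-- `(G, ∘_{ψ,α})` is a group: the operation is associative, `1` is a
two-sided identity, and `ψ_α(g)⁻¹ · g⁻¹ · ψ_α(g)` is a two-sided inverse of `g`. -/
theorem op_group {G : Type*} [Group G]
    (ψ : Monoid.End G) (hψ : ∀ g h : G, ψ ⁅g, h⁆ ∈ Subgroup.center G)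
    (α : FreeGroup (Monoid.End G)) :
    (∀ g h k : G, op ψ α (op ψ α g h) k = op ψ α g (op ψ α h k)) ∧
    (∀ g : G, op ψ α 1 g = g ∧ op ψ α g 1 = g) ∧
    (∀ g : G, op ψ α ((ψ (evalE α g))⁻¹ * g⁻¹ * ψ (evalE α g)) g = 1 ∧
      op ψ α g ((ψ (evalE α g))⁻¹ * g⁻¹ * ψ (evalE α g)) = 1) := by
  have hκ := conjEval_conjEval ψ hψ α
  have hinv (g : G) :
      (ψ (evalE α g))⁻¹ * g⁻¹ * ψ (evalE α g) = (conjEval ψ hψ α g)⁻¹ g⁻¹ := by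
    rw [conjEval_apply, MulAut.conj_inv_apply]
  simp only [op_eq_twistedMul ψ hψ α, hinv]
  exact ⟨twistedMul_assoc hκ, fun g => ⟨one_twistedMul g, twistedMul_one g⟩,
    fun g => ⟨twistedMul_inv_left hκ g, twistedMul_inv_right g⟩⟩
end

section
/- Let ψ, ψ' : G → G be commutator-central endomorphisms of a group G such that ⁅ψ(g), ψ'(h)⁆ ∈ Z(G) for all g, h ∈ G. Let α, β ∈ 𝓔, write g ∘ h := g ∘_{ψ,α} h and g ⋆ h := g ∘_{ψ',β} h, and for g ∈ G write g̃ := ψ_α(g)⁻¹ · g⁻¹ · ψ_α(g) (the inverse of g in the group (G, ∘)). Then the brace relation g ⋆ (h ∘ k) = ((g ⋆ h) ∘ g̃) ∘ (g ⋆ k) holds for all g, h, k ∈ G; consequently (G, ∘, ⋆) is a skew left brace. -/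
open scoped commutatorElement

/-!
Write `g ∘ h = g · c(g)(h)` with `c(g)` the inner automorphism induced by `ψ_α(g)`.
Since `ψ` is commutator-central, the automorphisms `Inn(ψ x)` commute pairwise, so `c` is a
homomorphism `G → Aut(G)` with commutative image; in particular `c` is unchanged when its
argument is conjugated. With `ρ = Inn(ψ'_β(g))`, both sides of the brace relation then reduce
to `g · ρ(h) · c(h)(ρ(k))`, the left one because `ρ` and `c(h)` commute by the hypothesis on
`⁅ψ g, ψ' h⁆`.
-/

section

variable {G : Type*} [Group G]

theorem map_evalE_mul_of_commute {H : Type*} [Group H] (f : G →* H)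
    (hf : ∀ x y, Commute (f x) (f y)) (α : FreeGroup (Monoid.End G)) (x y : G) :
    f (evalE α (x * y)) = f (evalE α x) * f (evalE α y) := by
  induction α using FreeGroup.induction_on with
  | C1 => simp [evalE]
  | of φ => simp [evalE]
  | inv_of φ ih =>
    simp only [evalE, map_inv] at ih ⊢
    rw [ih, mul_inv_rev, (hf _ _).inv_inv.eq]
  | mul a b iha ihb =>
    simp only [evalE, map_mul] at iha ihb ⊢
    rw [iha, ihb]
    simp only [mul_assoc]
    exact congrArg _ ((hf _ _).left_comm _)

theorem MulAut.conj_eq_one_of_mem_center {z : G} (hz : z ∈ Subgroup.center G) :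
    MulAut.conj z = 1 := by
  ext w
  rw [MulAut.conj_apply, ← Subgroup.mem_center_iff.mp hz w, mul_inv_cancel_right,
    MulAut.one_apply]

theorem MulAut.commute_conj_of_commutatorElement_mem_center {x y : G}
    (h : ⁅x, y⁆ ∈ Subgroup.center G) : Commute (MulAut.conj x) (MulAut.conj y) := by
  rw [← commutatorElement_eq_one_iff_commute, ← map_commutatorElement]
  exact MulAut.conj_eq_one_of_mem_center h

theorem commute_conj_of_map_commutatorElement_mem_center (ψ : Monoid.End G)
    (hψ : ∀ g h : G, ψ ⁅g, h⁆ ∈ Subgroup.center G) (x y : G) :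
    Commute (MulAut.conj (ψ x)) (MulAut.conj (ψ y)) :=
  MulAut.commute_conj_of_commutatorElement_mem_center (map_commutatorElement ψ x y ▸ hψ x y)

theorem op_eq_mul_conj (ψ : Monoid.End G) (α : FreeGroup (Monoid.End G)) (g h : G) :
    op ψ α g h = g * MulAut.conj (ψ (evalE α g)) h := by
  rw [op, MulAut.conj_apply]
  group

end

section

variable {G : Type*} [Group G] (ψ : Monoid.End G)
  (hψ : ∀ g h : G, ψ ⁅g, h⁆ ∈ Subgroup.center G) (α : FreeGroup (Monoid.End G))

def conjEvalHom : G →* MulAut G :=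
  MonoidHom.mk' (fun g => MulAut.conj (ψ (evalE α g)))
    (map_evalE_mul_of_commute (MulAut.conj.comp ψ)
      (commute_conj_of_map_commutatorElement_mem_center ψ hψ) α)

theorem conjEvalHom_apply (g : G) : conjEvalHom ψ hψ α g = MulAut.conj (ψ (evalE α g)) :=
  rfl

theorem conjEvalHom_commute (x y : G) :
    Commute (conjEvalHom ψ hψ α x) (conjEvalHom ψ hψ α y) :=
  commute_conj_of_map_commutatorElement_mem_center ψ hψ _ _

theorem conjEvalHom_conj (z y : G) :
    conjEvalHom ψ hψ α (MulAut.conj z y) = conjEvalHom ψ hψ α y := by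
  rw [MulAut.conj_apply, map_mul, map_mul, map_inv,
    (conjEvalHom_commute ψ hψ α z y).mul_inv_cancel]

end

theorem brace_relation_two_maps_general {G : Type*} [Group G]
    (ψ ψ' : Monoid.End G)
    (hψ : ∀ g h : G, ψ ⁅g, h⁆ ∈ Subgroup.center G)
    (hcomm : ∀ g h : G, ⁅ψ g, ψ' h⁆ ∈ Subgroup.center G)
    (α β : FreeGroup (Monoid.End G)) (g h k : G) :
    op ψ' β g (op ψ α h k) =
      op ψ α (op ψ α (op ψ' β g h) ((ψ (evalE α g))⁻¹ * g⁻¹ * ψ (evalE α g)))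
        (op ψ' β g k) := by
  rw [← MulAut.conj_inv_apply]
  simp only [op_eq_mul_conj, ← conjEvalHom_apply ψ hψ α]
  set c := conjEvalHom ψ hψ α
  set ρ := MulAut.conj (ψ' (evalE β g))
  have hX : g * ρ h * c (g * ρ h) ((c g)⁻¹ g⁻¹) = g * ρ h * c h g⁻¹ := by
    rw [map_mul, conjEvalHom_conj, (conjEvalHom_commute ψ hψ α g h).eq, MulAut.mul_apply,
      MulAut.apply_inv_self]
  have hcX : c (g * ρ h * c h g⁻¹) = c h := by
    have hcc : c (c h g⁻¹) = c g⁻¹ := conjEvalHom_conj ψ hψ α _ _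
    rw [map_mul, map_mul, conjEvalHom_conj, hcc, map_inv,
      (conjEvalHom_commute ψ hψ α g h).mul_inv_cancel]
  have hρc : ρ (c h k) = c h (ρ k) :=
    congrArg (· k) (MulAut.commute_conj_of_commutatorElement_mem_center (hcomm _ _)).symm.eq
  rw [hX, hcX, map_mul, map_mul, hρc, mul_assoc, ← mul_assoc (c h g⁻¹), ← map_mul,
    inv_mul_cancel, map_one, one_mul, mul_assoc]

/-- for commutator-central `ψ, ψ'` whose images commute modulo the
center, the brace relation `g ⋆ (h ∘ k) = ((g ⋆ h) ∘ g̃) ∘ (g ⋆ k)` holds, where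
`∘ = ∘_{ψ,α}`, `⋆ = ∘_{ψ',β}` and `g̃` is the `∘`-inverse of `g`;
consequently `(G, ∘, ⋆)` is a skew left brace. -/
theorem brace_relation_two_maps {G : Type*} [Group G]
    (ψ ψ' : Monoid.End G)
    (hψ : ∀ g h : G, ψ ⁅g, h⁆ ∈ Subgroup.center G)
    (hψ' : ∀ g h : G, ψ' ⁅g, h⁆ ∈ Subgroup.center G)
    (hcomm : ∀ g h : G, ⁅ψ g, ψ' h⁆ ∈ Subgroup.center G)
    (α β : FreeGroup (Monoid.End G)) (g h k : G) :
    op ψ' β g (op ψ α h k) =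
      op ψ α (op ψ α (op ψ' β g h) ((ψ (evalE α g))⁻¹ * g⁻¹ * ψ (evalE α g)))
        (op ψ' β g k) :=
  brace_relation_two_maps_general ψ ψ' hψ hcomm α β g h k
end

section
/- Let ψ : G → G be a commutator-central endomorphism of a group G and let α, β ∈ 𝓔. Write g ∘ h := g ∘_{ψ,α} h and g ⋆ h := g ∘_{ψ,β} h, and for g ∈ G write g̃ := ψ_α(g)⁻¹ · g⁻¹ · ψ_α(g) (the inverse of g in (G, ∘)). Then g ⋆ (h ∘ k) = ((g ⋆ h) ∘ g̃) ∘ (g ⋆ k) for all g, h, k ∈ G; that is, any two operations arising from the same commutator-central map form a skew left brace, so (G, {∘_{ψ,α} : α ∈ 𝓔}) is a brace block. -/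
/-!
Modulo the centre `Z(G)`, the map `g ↦ ψ_α(g)` is a homomorphism with abelian image: `ψ` kills
commutators modulo `Z(G)`, so it factors through `Gᵃᵇ`, and after abelianization evaluating `α`
is multiplicative in `g`. Since conjugation by `x` only depends on `x Z(G)`, in the brace identity
`ψ_α(g ⋆ h)` may be replaced by `ψ_α(g) ψ_α(h)`, `ψ_α((g ⋆ h) ∘ g̃)` by `ψ_α(h)`, and `ψ_β(g)` and
`ψ_α(h)` may be commuted; what remains is an identity in the free group.
-/

open scoped commutatorElement

section

variable {G : Type*} [Group G]

def evalEHom {H : Type*} [CommGroup H] (χ : G →* H) : FreeGroup (Monoid.End G) →* G →* H :=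
  FreeGroup.lift fun φ => χ.comp φ

theorem evalEHom_apply {H : Type*} [CommGroup H] (χ : G →* H) (α : FreeGroup (Monoid.End G))
    (g : G) : evalEHom χ α g = χ (evalE α g) := by
  change (MonoidHom.eval g).comp (evalEHom χ) α =
    χ.comp (FreeGroup.lift fun φ : Monoid.End G => φ g) α
  congr 1
  ext φ
  simp only [evalEHom, MonoidHom.coe_comp, Function.comp_apply, FreeGroup.lift_apply_of,
    MonoidHom.eval_apply_apply]
  rfl

theorem map_op {H : Type*} [CommGroup H] (F : G →* H) (ψ : Monoid.End G)
    (α : FreeGroup (Monoid.End G)) (g h : G) : F (op ψ α g h) = F g * F h := by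
  simp only [op, map_mul, map_inv, mul_assoc, mul_inv_cancel_comm_assoc]

theorem conj_eq_of_mk_eq {a b : G} (hab : (a : G ⧸ Subgroup.center G) = b) (x : G) :
    a * x * a⁻¹ = b * x * b⁻¹ := by
  obtain ⟨z, hz, rfl⟩ : ∃ z ∈ Subgroup.center G, b = a * z :=
    ⟨a⁻¹ * b, QuotientGroup.eq.mp hab, by group⟩
  have hzx : z * x = x * z := (Subgroup.mem_center_iff.mp hz x).symm
  calc a * x * a⁻¹ = a * (z * x * z⁻¹) * a⁻¹ := by rw [hzx, mul_inv_cancel_right]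
    _ = a * z * x * (a * z)⁻¹ := by group

theorem brace_identity_of_mk_eq {g h k A B C D E : G}
    (hD : (D : G ⧸ Subgroup.center G) = A * C) (hAC : (A : G ⧸ Subgroup.center G) * C = C * A)
    (hE : (E : G ⧸ Subgroup.center G) = C) (hBC : (B : G ⧸ Subgroup.center G)⁻¹ * C * B = C) :
    g * B * (h * C * k * C⁻¹) * B⁻¹ =
      g * B * h * B⁻¹ * D * (A⁻¹ * g⁻¹ * A) * D⁻¹ * E * (g * B * k * B⁻¹) * E⁻¹ := by
  have hD' : (D : G ⧸ Subgroup.center G) = ↑(A * C) := by simp only [QuotientGroup.mk_mul, hD]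
  have hAC' : (A * C : G) = (C * A : G ⧸ Subgroup.center G) := by
    simp only [QuotientGroup.mk_mul, hAC]
  have hBC' : (B⁻¹ * C * B : G) = (C : G ⧸ Subgroup.center G) := by
    simp only [QuotientGroup.mk_mul, QuotientGroup.mk_inv, hBC]
  symm
  calc _ = g * B * h * B⁻¹ * (D * (A⁻¹ * g⁻¹ * A) * D⁻¹) * (E * (g * B * k * B⁻¹) * E⁻¹) := by
        group
    _ = g * B * h * ((B⁻¹ * C * B) * k * (B⁻¹ * C * B)⁻¹) * B⁻¹ := by
        rw [conj_eq_of_mk_eq hD', conj_eq_of_mk_eq hAC', conj_eq_of_mk_eq hE]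
        group
    _ = g * B * (h * C * k * C⁻¹) * B⁻¹ := by
        rw [conj_eq_of_mk_eq hBC']
        group

def centralQuotientLift (ψ : Monoid.End G) (hψ : ∀ g h : G, ψ ⁅g, h⁆ ∈ Subgroup.center G) :
    Abelianization G →* G ⧸ Subgroup.center G :=
  QuotientGroup.lift _ ((QuotientGroup.mk' _).comp ψ) <| by
    rw [commutator_eq_closure, Subgroup.closure_le]
    rintro _ ⟨g, h, rfl⟩
    exact (QuotientGroup.eq_one_iff _).mpr (hψ g h)

theorem mk_apply_evalE (ψ : Monoid.End G) (hψ : ∀ g h : G, ψ ⁅g, h⁆ ∈ Subgroup.center G)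
    (α : FreeGroup (Monoid.End G)) (g : G) :
    (ψ (evalE α g) : G ⧸ Subgroup.center G) =
      centralQuotientLift ψ hψ (evalEHom Abelianization.of α g) := by
  rw [evalEHom_apply]
  rfl

end

/-- for a single commutator-central `ψ` and any `α, β ∈ 𝓔`, the
brace relation `g ⋆ (h ∘ k) = ((g ⋆ h) ∘ g̃) ∘ (g ⋆ k)` holds with `∘ = ∘_{ψ,α}`,
`⋆ = ∘_{ψ,β}`; hence `(G, {∘_{ψ,α} : α ∈ 𝓔})` is a brace block. -/
theorem brace_relation_one_map {G : Type*} [Group G]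
    (ψ : Monoid.End G) (hψ : ∀ g h : G, ψ ⁅g, h⁆ ∈ Subgroup.center G)
    (α β : FreeGroup (Monoid.End G)) (g h k : G) :
    op ψ β g (op ψ α h k) =
      op ψ α (op ψ α (op ψ β g h) ((ψ (evalE α g))⁻¹ * g⁻¹ * ψ (evalE α g)))
        (op ψ β g k) := by
  set χ := centralQuotientLift ψ hψ
  set F := evalEHom Abelianization.of α
  have hπ := mk_apply_evalE ψ hψ α
  have hFx : F (op ψ β g h) = F g * F h := map_op F ψ β g h
  have hFy : F (op ψ α (op ψ β g h) ((ψ (evalE α g))⁻¹ * g⁻¹ * ψ (evalE α g))) = F h := by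
    rw [map_op, hFx, map_mul, map_mul, map_inv, map_inv, inv_mul_cancel_comm, mul_inv_cancel_comm]
  have hD : (ψ (evalE α (op ψ β g h)) : G ⧸ Subgroup.center G) =
      ψ (evalE α g) * ψ (evalE α h) := by
    rw [hπ, hπ, hπ, hFx, map_mul]
  have hAC : (ψ (evalE α g) : G ⧸ Subgroup.center G) * ψ (evalE α h) =
      ψ (evalE α h) * ψ (evalE α g) := by
    rw [hπ, hπ, ← map_mul χ, ← map_mul χ, mul_comm (F g)]
  have hE : (ψ (evalE α (op ψ α (op ψ β g h) ((ψ (evalE α g))⁻¹ * g⁻¹ * ψ (evalE α g)))) :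
      G ⧸ Subgroup.center G) = ψ (evalE α h) := by
    rw [hπ, hπ, hFy]
  have hBC : (ψ (evalE β g) : G ⧸ Subgroup.center G)⁻¹ * ψ (evalE α h) * ψ (evalE β g) =
      ψ (evalE α h) := by
    rw [mk_apply_evalE ψ hψ β, hπ, ← map_inv χ, ← map_mul χ, ← map_mul χ, inv_mul_cancel_comm]
  simp only [op] at hD hE ⊢
  exact brace_identity_of_mk_eq hD hAC hE hBC
end

section
/- Let ψ : G → G be a commutator-central endomorphism of a group G and let β ∈ 𝓔. Then the family N = {η_g : g ∈ G}, where η_g(h) = g ∘_{ψ,β} h, is G-stable: for all g, k, h ∈ G one has k · (g ∘_{ψ,β} (k⁻¹ · h)) = (k · g · ψ_β(g) · k⁻¹ · ψ_β(g)⁻¹) ∘_{ψ,β} h; that is, conjugating η_g by the left translation λ(k) yields η_{k g ψ_β(g) k⁻¹ ψ_β(g)⁻¹}. -/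
open scoped commutatorElement

/-! With `c = ψ_β(g)`, the element `k g c k⁻¹ c⁻¹` agrees with `g` modulo `[G, G]`. Evaluation at `β`
respects congruence modulo `[G, G]`, because every endomorphism does, and `ψ` maps `[G, G]` into
the center; so `ψ_β` of the two elements differ by a central factor and conjugate `h` alike. -/

section

variable {G H : Type*} [Group G] [Group H]

lemma conj_eq_of_abelianization_eq {ψ : G →* H}
    (hψ : ∀ g h : G, ψ ⁅g, h⁆ ∈ Subgroup.center H) {x y : G}
    (hxy : Abelianization.of x = Abelianization.of y) (h : H) :
    ψ x * h * (ψ x)⁻¹ = ψ y * h * (ψ y)⁻¹ := by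
  have hle : commutator G ≤ (Subgroup.center H).comap ψ :=
    Subgroup.commutator_le.mpr fun g _ g' _ => hψ g g'
  have hcentral : ψ (x⁻¹ * y) ∈ Subgroup.center H := hle (QuotientGroup.eq.mp hxy)
  have hy : ψ y = ψ x * ψ (x⁻¹ * y) := by rw [← map_mul, mul_inv_cancel_left]
  rw [hy, mul_assoc (ψ x) (ψ (x⁻¹ * y)) h, ← Subgroup.mem_center_iff.mp hcentral h]
  group

lemma abelianization_of_evalE (β : FreeGroup (Monoid.End G)) (x : G) :
    Abelianization.of (evalE β x) =
      FreeGroup.lift (fun φ : Monoid.End G => Abelianization.map φ (Abelianization.of x)) β := by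
  change (Abelianization.of.comp (FreeGroup.lift fun φ : Monoid.End G => φ x)) β = _
  congr 1
  ext φ
  rfl

lemma abelianization_of_evalE_congr (β : FreeGroup (Monoid.End G)) {x y : G}
    (hxy : Abelianization.of x = Abelianization.of y) :
    Abelianization.of (evalE β x) = Abelianization.of (evalE β y) := by
  rw [abelianization_of_evalE, abelianization_of_evalE, hxy]

lemma abelianization_of_mul_conj_mul_inv (k g c : G) :
    Abelianization.of (k * g * c * k⁻¹ * c⁻¹) = Abelianization.of g := by
  simp only [map_mul, map_inv]
  rw [mul_right_comm _ _ (Abelianization.of k)⁻¹]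
  simp

lemma op_eq_of_abelianization_eq {ψ : Monoid.End G}
    (hψ : ∀ g h : G, ψ ⁅g, h⁆ ∈ Subgroup.center G) (β : FreeGroup (Monoid.End G)) {x y : G}
    (hxy : Abelianization.of x = Abelianization.of y) (h : G) :
    op ψ β x h = x * ψ (evalE β y) * h * (ψ (evalE β y))⁻¹ := by
  calc op ψ β x h = x * (ψ (evalE β x) * h * (ψ (evalE β x))⁻¹) := by simp only [op, mul_assoc]
    _ = x * (ψ (evalE β y) * h * (ψ (evalE β y))⁻¹) :=
      congrArg (x * ·) (conj_eq_of_abelianization_eq hψ (abelianization_of_evalE_congr β hxy) h)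
    _ = x * ψ (evalE β y) * h * (ψ (evalE β y))⁻¹ := by simp only [mul_assoc]

end

/-- the family `N = {η_g}` is `G`-stable: conjugating `η_g` by the
left translation `λ(k)` yields `η_{k·g·ψ_β(g)·k⁻¹·ψ_β(g)⁻¹}`. -/
theorem op_G_stable {G : Type*} [Group G]
    (ψ : Monoid.End G) (hψ : ∀ g h : G, ψ ⁅g, h⁆ ∈ Subgroup.center G)
    (β : FreeGroup (Monoid.End G)) (g k h : G) :
    k * op ψ β g (k⁻¹ * h) =
      op ψ β (k * g * ψ (evalE β g) * k⁻¹ * (ψ (evalE β g))⁻¹) h := by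
  rw [op_eq_of_abelianization_eq hψ β (abelianization_of_mul_conj_mul_inv k g _), op]
  group
end

section
/- Let G be a group of nilpotency class at most two, i.e., ⁅g,h⁆ ∈ Z(G) for all g, h ∈ G, so that the identity endomorphism of G is commutator-central. Let ψ : G → G be any commutator-central endomorphism and β ∈ 𝓔. Let ψ·β ∈ 𝓔 denote the image of β under the group homomorphism 𝓔 → 𝓔 induced (via FreeGroup.map) by φ ↦ ψ ∘ φ on endomorphisms. Then g ∘_{ψ,β} h = g ∘_{id,ψ·β} h for all g, h ∈ G; in particular, the brace block arising from ψ is contained in the brace block arising from the identity map. -/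
open scoped commutatorElement

theorem evalE_map_mul_left {G : Type*} [Group G] (ψ : Monoid.End G)
    (β : FreeGroup (Monoid.End G)) (g : G) :
    evalE (FreeGroup.map (fun φ : Monoid.End G => ψ * φ) β) g = ψ (evalE β g) := by
  induction β using FreeGroup.induction_on with
  | C1 => simp [evalE]
  | of φ => simp [evalE]
  | inv_of φ ih => simp_all [evalE]
  | mul x y ihx ihy => simp_all [evalE]

theorem op_psi_eq_op_id_general {G : Type*} [Group G]
    (ψ : Monoid.End G)
    (β : FreeGroup (Monoid.End G)) (g h : G) :
    op ψ β g h =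
      op (1 : Monoid.End G) (FreeGroup.map (fun φ : Monoid.End G => ψ * φ) β) g h := by
  simp only [op, evalE_map_mul_left, Monoid.End.coe_one, id_eq]

/-- if `G` has nilpotency class at most two (all commutators are
central, so the identity endomorphism `1 : Monoid.End G` is commutator-central),
then for any commutator-central `ψ` and `β ∈ 𝓔` we have
`∘_{ψ,β} = ∘_{id, ψ·β}`, where `ψ·β = FreeGroup.map (ψ * ·) β`; hence the brace
block arising from `ψ` is contained in the one arising from the identity. -/
theorem op_psi_eq_op_id {G : Type*} [Group G]
    (hG : ∀ g h : G, ⁅g, h⁆ ∈ Subgroup.center G)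
    (ψ : Monoid.End G) (hψ : ∀ g h : G, ψ ⁅g, h⁆ ∈ Subgroup.center G)
    (β : FreeGroup (Monoid.End G)) (g h : G) :
    op ψ β g h =
      op (1 : Monoid.End G) (FreeGroup.map (fun φ : Monoid.End G => ψ * φ) β) g h :=
  op_psi_eq_op_id_general ψ β g h
end

section
/- Let G be a group of nilpotency class at most two, i.e., ⁅g,h⁆ ∈ Z(G) for all g, h ∈ G (so the identity endomorphism is commutator-central), and let α ∈ 𝓔. Let σ : 𝓔 → 𝓔 be the group homomorphism determined by σ(of φ) = (of φ)⁻¹ for each endomorphism φ, and set β := (of id_G)⁻¹ · σ(α) ∈ 𝓔. Then for all g, h ∈ G, g ∘_{id,β} h = (g⁻¹ ∘_{id,α} h⁻¹)⁻¹; that is, the opposite brace operation ĝ∘_α of ∘_{id,α} is itself of the form ∘_{id,β} and hence belongs to the same brace block. -/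
/-! The opposite operation is computed pointwise: writing `a = α(g⁻¹)`, the element
`β = (of id)⁻¹ · σ(α)` evaluates at `g` to `g⁻¹ a`, because every endomorphism commutes with
inversion. Both `g ∘_{id,β} h` and `(g⁻¹ ∘_{id,α} h⁻¹)⁻¹` then reduce to `a h a⁻¹ g`, an identity
valid in every group. -/

section

variable {G : Type*} [Group G]

lemma evalE_mul (α β : FreeGroup (Monoid.End G)) (g : G) :
    evalE (α * β) g = evalE α g * evalE β g :=
  map_mul _ α β

lemma evalE_inv (α : FreeGroup (Monoid.End G)) (g : G) : evalE α⁻¹ g = (evalE α g)⁻¹ :=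
  map_inv _ α

lemma evalE_of (φ : Monoid.End G) (g : G) : evalE (FreeGroup.of φ) g = φ g :=
  FreeGroup.lift_apply_of

lemma evalE_lift_inv_of (α : FreeGroup (Monoid.End G)) (g : G) :
    evalE (FreeGroup.lift (fun φ : Monoid.End G => (FreeGroup.of φ)⁻¹) α) g = evalE α g⁻¹ := by
  have hom_eq : (FreeGroup.lift fun φ : Monoid.End G => φ g).comp
      (FreeGroup.lift fun φ : Monoid.End G => (FreeGroup.of φ)⁻¹) =
      FreeGroup.lift fun φ : Monoid.End G => φ g⁻¹ :=
    FreeGroup.ext_hom _ _ fun φ => by simp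
  exact DFunLike.congr_fun hom_eq α

lemma op_one_apply (α : FreeGroup (Monoid.End G)) (g h : G) :
    op 1 α g h = g * evalE α g * h * (evalE α g)⁻¹ :=
  rfl

lemma op_one_eq_inv_op_one_inv {α β : FreeGroup (Monoid.End G)} {g : G}
    (hβ : evalE β g = g⁻¹ * evalE α g⁻¹) (h : G) :
    op 1 β g h = (op 1 α g⁻¹ h⁻¹)⁻¹ := by
  rw [op_one_apply, op_one_apply, hβ]
  group

end

open scoped commutatorElement

theorem opposite_in_brace_block_general {G : Type*} [Group G]
    (α : FreeGroup (Monoid.End G)) (g h : G) :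
    op (1 : Monoid.End G)
        ((FreeGroup.of (1 : Monoid.End G))⁻¹ *
          FreeGroup.lift (fun φ : Monoid.End G => (FreeGroup.of φ)⁻¹) α) g h =
      (op (1 : Monoid.End G) α g⁻¹ h⁻¹)⁻¹ := by
  apply op_one_eq_inv_op_one_inv
  rw [evalE_mul, evalE_inv, evalE_of, evalE_lift_inv_of]
  rfl

/-- for `G` of nilpotency class at most two and `ψ = id`, the
opposite operation `g ∘̂_α h = (g⁻¹ ∘_α h⁻¹)⁻¹` equals `∘_{id,β}` with
`β = (of id)⁻¹ · σ(α)`, where `σ : 𝓔 → 𝓔` sends each generator `of φ` to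
`(of φ)⁻¹`; hence the opposite brace lies in the same brace block. -/
theorem opposite_in_brace_block {G : Type*} [Group G]
    (hG : ∀ g h : G, ⁅g, h⁆ ∈ Subgroup.center G)
    (α : FreeGroup (Monoid.End G)) (g h : G) :
    op (1 : Monoid.End G)
        ((FreeGroup.of (1 : Monoid.End G))⁻¹ *
          FreeGroup.lift (fun φ : Monoid.End G => (FreeGroup.of φ)⁻¹) α) g h =
      (op (1 : Monoid.End G) α g⁻¹ h⁻¹)⁻¹ :=
  opposite_in_brace_block_general α g h
end

section
/- Let G = Q₈ be the quaternion group of order 8 (QuaternionGroup 2 in Mathlib), whose identity endomorphism is commutator-central since ⁅G,G⁆ = Z(G). Then for every α ∈ 𝓔 and every g ∈ G, the fourth power of g in the group (G, ∘_{id,α}) is the identity: ((g ∘_{id,α} g) ∘_{id,α} g) ∘_{id,α} g = 1. Consequently (G, ∘_{id,α}) is never a cyclic group of order 8, so no operation in the brace block on Q₈ yields a cyclic group. -/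
/-- `∘_{id,α}`-powers of `g` in the quaternion group: `opPow α g 0 = 1` and
`opPow α g (n+1) = g ∘_{id,α} (opPow α g n)`. -/
def opPow (α : FreeGroup (Monoid.End (QuaternionGroup 2))) (g : QuaternionGroup 2) :
    ℕ → QuaternionGroup 2
  | 0 => 1
  | n + 1 => op 1 α g (opPow α g n)

abbrev Q := QuaternionGroup 2

def chi (g : Q) : Q →* Multiplicative (ZMod 2) where
  toFun c := if c * g = g * c then 1 else Multiplicative.ofAdd 1
  map_one' := by simp
  map_mul' c d := by revert g c d; decide

lemma chi_inv (g c : Q) : chi g c⁻¹ = chi g c := by revert g c; decide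

lemma conj_of_chi_one {g c : Q} (h : chi g c = 1) : c * g * c⁻¹ = g := by
  revert h; revert g c; decide

lemma conj_of_chi_ne {g c : Q} (h : chi g c ≠ 1) : c * g * c⁻¹ = g⁻¹ := by
  revert h; revert g c; decide

lemma chi_sq (g x : Q) : chi g (x * x) = 1 := by revert g x; decide

lemma evalE_def {G : Type*} [Group G] (α : FreeGroup (Monoid.End G)) (g : G) :
    evalE α g = FreeGroup.lift (fun φ : Monoid.End G => φ g) α := rfl

lemma lift_comp {β H K : Type*} [Group H] [Group K] (f : β → H) (χ : H →* K)
    (α : FreeGroup β) : χ (FreeGroup.lift f α) = FreeGroup.lift (fun b => χ (f b)) α := by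
  have : χ.comp (FreeGroup.lift f) = FreeGroup.lift (fun b => χ (f b)) := by
    apply FreeGroup.ext_hom; intro a; simp [FreeGroup.lift_apply_of]
  exact DFunLike.congr_fun this α

lemma lift_const_one {β H : Type*} [Group H] (α : FreeGroup β) :
    FreeGroup.lift (fun _ : β => (1 : H)) α = 1 := by
  have : FreeGroup.lift (fun _ : β => (1 : H)) = 1 := by
    apply FreeGroup.ext_hom; intro a; simp [FreeGroup.lift_apply_of]
  rw [this]; rfl

lemma chi_evalE (α : FreeGroup (Monoid.End Q)) (g h : Q) :
    chi g (evalE α h) = FreeGroup.lift (fun φ : Monoid.End Q => chi g (φ h)) α := by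
  rw [evalE_def, lift_comp]

lemma chi_evalE_mul_self (α : FreeGroup (Monoid.End Q)) (g h : Q) :
    chi g (evalE α (h * h)) = 1 := by
  rw [chi_evalE]
  have : (fun φ : Monoid.End Q => chi g (φ (h * h))) = fun _ => (1 : Multiplicative (ZMod 2)) := by
    funext φ; rw [map_mul]; exact chi_sq g (φ h)
  rw [this, lift_const_one]

lemma chi_evalE_cube (α : FreeGroup (Monoid.End Q)) (g : Q) :
    chi g (evalE α (g * g * g)) = chi g (evalE α g) := by
  rw [chi_evalE, chi_evalE]
  have h : (fun φ : Monoid.End Q => chi g (φ (g * g * g)))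
      = fun φ : Monoid.End Q => chi g (φ g) := by
    funext φ
    rw [show φ (g*g*g) = φ (g*g) * φ g from map_mul φ _ _, map_mul (chi g),
      show φ (g*g) = φ g * φ g from map_mul φ _ _, chi_sq, one_mul]
  rw [h]

lemma evalE_one' (α : FreeGroup (Monoid.End Q)) : evalE α (1 : Q) = 1 := by
  rw [evalE_def]
  have : (fun φ : Monoid.End Q => φ (1:Q)) = fun _ => (1:Q) := by
    funext φ; exact map_one φ
  rw [this, lift_const_one]

lemma op_id (α : FreeGroup (Monoid.End Q)) (g h : Q) :
    op 1 α g h = g * evalE α g * h * (evalE α g)⁻¹ := rfl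

lemma g4 : ∀ g : Q, g * g * g * g = 1 := by decide

lemma key3 (x y z : Q) : x * y * z * y⁻¹ = x * (y * z * y⁻¹) := by group

lemma opPow_four (α : FreeGroup (Monoid.End Q)) (g : Q) : opPow α g 4 = 1 := by
  show op 1 α g (op 1 α g (op 1 α g (op 1 α g 1))) = 1
  simp only [op_id]
  generalize evalE α g = c
  revert g c
  decide

/-- in `G = Q₈` (where the identity endomorphism is
commutator-central since `[G,G] = Z(G)`), every element of `(G, ∘_{id,α})` has
order dividing `4`; consequently no `(G, ∘_{id,α})` is cyclic of order `8`. -/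
theorem quaternion_op_fourth_power_eq_one :
    (∀ (α : FreeGroup (Monoid.End (QuaternionGroup 2))) (g : QuaternionGroup 2),
      op 1 α (op 1 α (op 1 α g g) g) g = 1) ∧
    (∀ α : FreeGroup (Monoid.End (QuaternionGroup 2)),
      ¬ ∃ g : QuaternionGroup 2, Function.Surjective (opPow α g)) := by
  constructor
  · intro α g
    by_cases h0 : chi g (evalE α g) = 1
    · have hx1 : op 1 α g g = g * g := by
        rw [op_id, key3, conj_of_chi_one h0]
      rw [hx1]
      have hc1 : chi g (evalE α (g * g)) = 1 := chi_evalE_mul_self α g g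
      have hx2 : op 1 α (g * g) g = g * g * g := by
        rw [op_id, key3, conj_of_chi_one hc1]
      rw [hx2]
      have hc2 : chi g (evalE α (g * g * g)) = 1 := by
        rw [chi_evalE_cube]; exact h0
      rw [op_id, key3, conj_of_chi_one hc2]
      exact g4 g
    · have hx1 : op 1 α g g = 1 := by
        rw [op_id, key3, conj_of_chi_ne h0]
        simp
      rw [hx1]
      have hx2 : op 1 α (1:Q) g = g := by
        rw [op_id, evalE_one']; simp
      rw [hx2]
      rw [op_id, key3, conj_of_chi_ne h0]
      simp
  · intro α ⟨g, hsurj⟩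
    have h4 : opPow α g 4 = 1 := opPow_four α g
    have hper : ∀ n, opPow α g (n + 4) = opPow α g n := by
      intro n
      induction n with
      | zero => exact h4
      | succ k ih => show op 1 α g (opPow α g (k+4)) = _; rw [ih]; rfl
    have hmod : ∀ n, opPow α g n = opPow α g (n % 4) := by
      intro n
      induction n using Nat.strong_induction_on with
      | _ n ih =>
        by_cases h : n < 4
        · rw [Nat.mod_eq_of_lt h]
        · have h4le : 4 ≤ n := Nat.le_of_not_lt h
          have heq : n - 4 + 4 = n := Nat.sub_add_cancel h4le
          rw [← heq, hper, ih (n-4) (by omega), Nat.add_mod_right]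
    have hsurj' : Function.Surjective (fun i : Fin 4 => opPow α g i) := by
      intro q
      obtain ⟨n, hn⟩ := hsurj q
      exact ⟨⟨n % 4, Nat.mod_lt _ (by norm_num)⟩, by simp [← hmod, hn]⟩
    have hcard := Fintype.card_le_of_surjective _ hsurj'
    simp [QuaternionGroup.card] at hcard
end

section
/- Let F be a field and n ≥ 1. Let ψ : GLₙ(F) → GLₙ(F) send A to the invertible diagonal matrix whose (0,0) entry is det A and whose other diagonal entries are 1, and define the operation A ∘ B := A · ψ(A⁻¹) · B · ψ(A⁻¹)⁻¹ on GLₙ(F) (the case α = −1 of the brace construction). Then (GLₙ(F), ∘) is isomorphic to F^× × SLₙ(F): there exists a bijection e : F^× × SLₙ(F) → GLₙ(F) such that e(x · y) = e(x) ∘ e(y) for all x, y ∈ F^× × SLₙ(F). -/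
open Matrix

/-- The map `ψ_t : GLₙ(F) → GLₙ(F)` sending `A` to the invertible diagonal matrix
whose `(t,t)` entry is `det A` and whose other diagonal entries are `1`. -/
def psiDiag {F : Type*} [Field F] {n : ℕ} (t : Fin n)
    (A : Matrix.GeneralLinearGroup (Fin n) F) : Matrix.GeneralLinearGroup (Fin n) F :=
  Matrix.GeneralLinearGroup.mkOfDetNeZero
    (Matrix.diagonal fun i => if i = t then (A : Matrix (Fin n) (Fin n) F).det else 1)
    (by
      have h : ((Matrix.GeneralLinearGroup.det A : Fˣ) : F) ≠ 0 :=
        Units.ne_zero _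
      simpa [Matrix.det_diagonal, Finset.prod_ite_eq'] using h)

/-- The operation `A ∘ B := A · ψ(A⁻¹) · B · ψ(A⁻¹)⁻¹` on `GLₙ(F)`, the case
`α = −1` of the brace construction, with `ψ = ψ_0`. -/
def opGL {F : Type*} [Field F] {n : ℕ} (hn : 1 ≤ n)
    (A B : Matrix.GeneralLinearGroup (Fin n) F) : Matrix.GeneralLinearGroup (Fin n) F :=
  A * psiDiag (⟨0, hn⟩ : Fin n) A⁻¹ * B * (psiDiag (⟨0, hn⟩ : Fin n) A⁻¹)⁻¹

/-- The diagonal unit matrix with `x` at position `t` and `1` elsewhere. -/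
def dUnit {F : Type*} [Field F] {n : ℕ} (t : Fin n) (x : Fˣ) :
    Matrix.GeneralLinearGroup (Fin n) F where
  val := Matrix.diagonal fun i => if i = t then (x : F) else 1
  inv := Matrix.diagonal fun i => if i = t then ((x⁻¹ : Fˣ) : F) else 1
  val_inv := by
    rw [Matrix.diagonal_mul_diagonal]
    convert Matrix.diagonal_one using 2
    ext i
    by_cases h : i = t <;> simp [h]
  inv_val := by
    rw [Matrix.diagonal_mul_diagonal]
    convert Matrix.diagonal_one using 2
    ext i
    by_cases h : i = t <;> simp [h]

theorem dUnit_val {F : Type*} [Field F] {n : ℕ} (t : Fin n) (x : Fˣ) :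
    (dUnit t x : Matrix (Fin n) (Fin n) F)
      = Matrix.diagonal fun i => if i = t then (x : F) else 1 := rfl

theorem dUnit_mul {F : Type*} [Field F] {n : ℕ} (t : Fin n) (x y : Fˣ) :
    dUnit t x * dUnit t y = dUnit (F := F) t (x * y) := by
  apply Units.ext
  show (dUnit t x : Matrix (Fin n) (Fin n) F) * dUnit t y = dUnit t (x * y)
  rw [dUnit_val, dUnit_val, dUnit_val, Matrix.diagonal_mul_diagonal]
  refine congrArg Matrix.diagonal ?_
  funext i
  by_cases h : i = t <;> simp [h]

theorem dUnit_inv {F : Type*} [Field F] {n : ℕ} (t : Fin n) (x : Fˣ) :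
    (dUnit (F := F) t x)⁻¹ = dUnit t x⁻¹ := by
  apply Units.ext
  show (dUnit t x : (Matrix (Fin n) (Fin n) F)ˣ).inv
      = (dUnit t x⁻¹ : Matrix (Fin n) (Fin n) F)
  rw [dUnit_val]
  rfl

theorem det_dUnit {F : Type*} [Field F] {n : ℕ} (t : Fin n) (x : Fˣ) :
    (dUnit t x : Matrix (Fin n) (Fin n) F).det = (x : F) := by
  rw [dUnit_val, Matrix.det_diagonal, Finset.prod_ite_eq']
  simp

theorem psiDiag_eq_dUnit {F : Type*} [Field F] {n : ℕ} (t : Fin n)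
    (A : Matrix.GeneralLinearGroup (Fin n) F) :
    psiDiag t A = dUnit t (Matrix.GeneralLinearGroup.det A) := by
  apply Units.ext
  rfl

/-- `(GLₙ(F), ∘)` is isomorphic to `F^× × SLₙ(F)`: there is a
bijection `e : F^× × SLₙ(F) → GLₙ(F)` with `e (x * y) = e x ∘ e y`. -/
theorem opGL_iso_units_prod_SL {F : Type*} [Field F] {n : ℕ} (hn : 1 ≤ n) :
    ∃ e : Fˣ × Matrix.SpecialLinearGroup (Fin n) F → Matrix.GeneralLinearGroup (Fin n) F,
      Function.Bijective e ∧ ∀ x y, e (x * y) = opGL hn (e x) (e y) := by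
  set t : Fin n := ⟨0, hn⟩
  refine ⟨fun p => (Matrix.SpecialLinearGroup.toGL p.2) * dUnit t p.1, ?_, ?_⟩
  · constructor
    · rintro ⟨x, S⟩ ⟨y, T⟩ h
      have h : Matrix.SpecialLinearGroup.toGL S * dUnit t x
          = Matrix.SpecialLinearGroup.toGL T * dUnit t y := h
      have hdet : x = y := by
        have := congrArg (fun A : Matrix.GeneralLinearGroup (Fin n) F =>
          (A : Matrix (Fin n) (Fin n) F).det) h
        simp only [Matrix.GeneralLinearGroup.coe_mul, Matrix.det_mul] at this
        have hS : ((Matrix.SpecialLinearGroup.toGL S : Matrix.GeneralLinearGroup (Fin n) F)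
            : Matrix (Fin n) (Fin n) F).det = 1 := S.2
        have hT : ((Matrix.SpecialLinearGroup.toGL T : Matrix.GeneralLinearGroup (Fin n) F)
            : Matrix (Fin n) (Fin n) F).det = 1 := T.2
        rw [hS, hT, det_dUnit, det_dUnit, one_mul, one_mul] at this
        exact Units.ext this
      subst hdet
      have hST : Matrix.SpecialLinearGroup.toGL S = Matrix.SpecialLinearGroup.toGL T :=
        mul_right_cancel h
      have : S = T := by
        apply Subtype.ext
        exact congrArg Units.val hST
      rw [this]
    · intro A
      set x := Matrix.GeneralLinearGroup.det A with hx
      refine ⟨⟨x, ⟨(A * (dUnit t x)⁻¹ : Matrix.GeneralLinearGroup (Fin n) F), ?_⟩⟩, ?_⟩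
      · rw [Matrix.GeneralLinearGroup.coe_mul, Matrix.det_mul, dUnit_inv, det_dUnit]
        rw [Units.val_inv_eq_inv_val]
        show ((x : Fˣ) : F) * ((x : Fˣ) : F)⁻¹ = 1
        exact mul_inv_cancel₀ x.ne_zero
      · apply Units.ext
        show ((A * (dUnit t x)⁻¹ : Matrix.GeneralLinearGroup (Fin n) F)
            : Matrix (Fin n) (Fin n) F) * (dUnit t x : Matrix (Fin n) (Fin n) F)
            = (A : Matrix (Fin n) (Fin n) F)
        rw [← Matrix.GeneralLinearGroup.coe_mul]
        congr 1
        group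
  · rintro ⟨x, S⟩ ⟨y, T⟩
    dsimp only
    show Matrix.SpecialLinearGroup.toGL (S * T) * dUnit t (x * y)
      = opGL hn (Matrix.SpecialLinearGroup.toGL S * dUnit t x)
          (Matrix.SpecialLinearGroup.toGL T * dUnit t y)
    unfold opGL
    have hdet : Matrix.GeneralLinearGroup.det
        ((Matrix.SpecialLinearGroup.toGL S) * dUnit t x)⁻¹ = x⁻¹ := by
      rw [map_inv, _root_.map_mul]
      congr 1
      apply Units.ext
      have hS : ((Matrix.GeneralLinearGroup.det (Matrix.SpecialLinearGroup.toGL S) : Fˣ) : F)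
          = 1 := S.2
      have hD : ((Matrix.GeneralLinearGroup.det (dUnit t x) : Fˣ) : F) = (x : F) :=
        det_dUnit t x
      push_cast
      rw [hS, hD, one_mul]
    rw [psiDiag_eq_dUnit, hdet, _root_.map_mul, dUnit_inv, inv_inv]
    calc Matrix.SpecialLinearGroup.toGL S * Matrix.SpecialLinearGroup.toGL T
          * dUnit t (x * y)
        = Matrix.SpecialLinearGroup.toGL S * Matrix.SpecialLinearGroup.toGL T
          * (dUnit t y * dUnit t x) := by rw [dUnit_mul, mul_comm y x]
      _ = Matrix.SpecialLinearGroup.toGL S * (dUnit t x * dUnit t x⁻¹)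
          * Matrix.SpecialLinearGroup.toGL T * dUnit t y * dUnit t x := by
            have h1 : dUnit (F := F) t x * dUnit t x⁻¹ = 1 := by
              rw [dUnit_mul, mul_inv_cancel]
              apply Units.ext
              rw [dUnit_val]
              show _ = (1 : Matrix (Fin n) (Fin n) F)
              rw [← Matrix.diagonal_one]
              refine congrArg Matrix.diagonal ?_
              funext i; by_cases h : i = t <;> simp [h]
            rw [h1, mul_one]
            group
      _ = Matrix.SpecialLinearGroup.toGL S * dUnit t x * dUnit t x⁻¹
          * (Matrix.SpecialLinearGroup.toGL T * dUnit t y) * dUnit t x := by group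
end
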